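/- Let G be a countable group acting by measurable maps on a measurable space (Z, 𝔐), let ν be a G-invariant measure on Z, let F be a fundamental domain, and let ν_F be the measure ν_F(A) = ∑_{B∈𝔉₁} (1/|B|)·ν(A ∩ Z_B^F). Suppose φ : Z → Z is a measurable, ν-preserving map satisfying φ∘g = g∘φ for all g ∈ G. Then φ_*(ν_F)(A) = ν_F(A) for every G-invariant measurable set A ⊆ Z. -/

import Mathlib

/-!
Counting each point of `Z` through its cells with respect to two fundamental domains `F` and `F'`
expresses `ν_F(S)` as a sum over triples `(B, C, h)` with `1 ∈ B`, `h ∈ C` of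
`|B|⁻¹ |C|⁻¹ ν(S ∩ Z_B^F ∩ Z_C^{F'})`. For `G`-invariant `S`, translating by `h⁻¹` maps this sum
onto the same sum with `F` and `F'` exchanged, so `ν_F(S) = ν_{F'}(S)`. An equivariant
`ν`-preserving `φ` turns `F` into the fundamental domain `F' = φ⁻¹ F`, whose cells are the
preimages of those of `F`; hence `ν_F(φ⁻¹ A) = ν_{F'}(φ⁻¹ A) = ν_F(A)`.
-/

open MeasureTheory
open scoped ENNReal

/-- `Z_B^F = {z ∈ Z : for all g ∈ G, g • z ∈ F ↔ g ∈ B}`. -/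
def fdCell {G Z : Type*} [SMul G Z] (F : Set Z) (B : Finset G) : Set Z :=
  {z | ∀ g : G, g • z ∈ F ↔ g ∈ B}

open Set Function

section Cells

variable {G Z : Type*}

theorem pairwise_disjoint_fdCell [SMul G Z] (F : Set Z) :
    Pairwise (Disjoint on fun B : Finset G => fdCell F B) := fun _ _ hBC =>
  disjoint_left.2 fun _ hB hC => hBC <| Finset.ext fun g => (hB g).symm.trans (hC g)

theorem measurableSet_fdCell [SMul G Z] [Countable G] [MeasurableSpace Z]
    (hmeas : ∀ g : G, Measurable fun z : Z => g • z) {F : Set Z} (hF : MeasurableSet F)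
    (B : Finset G) : MeasurableSet (fdCell F B) := by
  rw [fdCell, ofPred_forall]
  refine MeasurableSet.iInter fun g => ?_
  by_cases hg : g ∈ B
  · simp only [hg, iff_true]
    exact hmeas g hF
  · simp only [hg, iff_false]
    exact (hmeas g hF).compl

theorem preimage_fdCell {Y : Type*} [SMul G Z] [SMul G Y] {φ : Z → Y}
    (hφg : ∀ (g : G) (z : Z), φ (g • z) = g • φ z) (F : Set Y) (B : Finset G) :
    φ ⁻¹' fdCell F B = fdCell (φ ⁻¹' F) B := by
  ext z
  simp [fdCell, hφg]

variable [Group G] [MulAction G Z]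

theorem finite_setOf_smul_mem {F : Set Z} (hFfin : ∀ z ∈ F, {g : G | g • z ∈ F}.Finite)
    (z : Z) : {g : G | g • z ∈ F}.Finite := by
  rcases eq_empty_or_nonempty {g : G | g • z ∈ F} with h | ⟨g₀, hg₀⟩
  · simp [h]
  · refine ((hFfin _ hg₀).preimage (mul_left_injective g₀⁻¹).injOn).subset fun g hg => ?_
    simpa [mul_smul] using hg

theorem iUnion_fdCell {F : Set Z} (hFfin : ∀ z ∈ F, {g : G | g • z ∈ F}.Finite) :
    ⋃ B : Finset G, fdCell F B = univ :=
  eq_univ_of_forall fun z =>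
    mem_iUnion.2 ⟨(finite_setOf_smul_mem hFfin z).toFinset, fun g => by simp⟩

theorem fdCell_empty_subset (F : Set Z) :
    fdCell F (∅ : Finset G) ⊆ (⋃ g : G, (fun z : Z => g • z) '' F)ᶜ := by
  rintro z hz hmem
  obtain ⟨g, w, hw, rfl⟩ := mem_iUnion.1 hmem
  simpa using (hz g⁻¹).1 (by simpa using hw)

theorem preimage_smul_fdCell (F : Set Z) (h : G) (B : Finset G) :
    (fun z : Z => h • z) ⁻¹' fdCell F B = fdCell F (B.map (Equiv.mulRight h).toEmbedding) := by
  ext z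
  simp only [mem_preimage, fdCell, mem_ofPred_eq, Finset.mem_map_equiv, Equiv.mulRight_symm]
  exact (Equiv.mulRight h).forall_congr fun g => by simp [mul_smul]

end Cells

section Weights

variable {G : Type*}

open Classical in
noncomputable def cellWeight (B : Finset G) (g : G) : ℝ≥0∞ :=
  if g ∈ B then (B.card : ℝ≥0∞)⁻¹ else 0

theorem tsum_cellWeight {B : Finset G} (hB : B.Nonempty) : ∑' g, cellWeight B g = 1 := by
  classical
  simp only [cellWeight]
  rw [tsum_eq_sum (s := B) fun g hg => if_neg hg, Finset.sum_ite_mem,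
    Finset.inter_self, Finset.sum_const, nsmul_eq_mul]
  exact ENNReal.mul_inv_cancel (by simp [hB.ne_empty]) (by simp)

theorem cellWeight_map_mulRight [Group G] (B : Finset G) (h g : G) :
    cellWeight (B.map (Equiv.mulRight h).toEmbedding) g = cellWeight B (g * h⁻¹) := by
  classical
  unfold cellWeight
  rw [Finset.card_map]
  exact if_congr (Finset.mem_map_equiv.trans (by simp)) rfl rfl

def translateSwap [Group G] (p : Finset G × Finset G × G) : Finset G × Finset G × G :=
  (p.2.1.map (Equiv.mulRight p.2.2⁻¹).toEmbedding, p.1.map (Equiv.mulRight p.2.2⁻¹).toEmbedding,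
    p.2.2⁻¹)

theorem translateSwap_involutive [Group G] : Function.Involutive (translateSwap (G := G)) := by
  rintro ⟨B, C, h⟩
  simp only [translateSwap, inv_inv, Prod.mk.injEq, and_true]
  constructor <;> ext <;> simp

end Weights

/-- The fundamental domains of the paper: `G • F` is conull and every orbit meets `F` in
finitely many points. -/
structure IsFiniteOverlapDomain (G : Type*) {Z : Type*} [Group G] [MulAction G Z]
    [MeasurableSpace Z] (ν : Measure Z) (F : Set Z) : Prop where
  measurableSet : MeasurableSet F
  null_compl_iUnion_smul : ν ((⋃ g : G, (fun z : Z => g • z) '' F)ᶜ) = 0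
  finite_setOf_smul_mem : ∀ z ∈ F, {g : G | g • z ∈ F}.Finite

section Measure

variable {G Z : Type*} [Group G] [MulAction G Z] [MeasurableSpace Z]

variable (G) in
/-- The measure `ν_F` of the paper, evaluated at `S`. -/
noncomputable def fdMass (ν : Measure Z) (F S : Set Z) : ℝ≥0∞ :=
  ∑' B : {B : Finset G // (1 : G) ∈ B}, (B.1.card : ℝ≥0∞)⁻¹ * ν (S ∩ fdCell F B.1)

variable (G) in
noncomputable def overlapMass (ν : Measure Z) (F F' S : Set Z) : ℝ≥0∞ :=
  ∑' p : Finset G × Finset G × G,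
    cellWeight p.1 1 * cellWeight p.2.1 p.2.2 * ν (S ∩ fdCell F p.1 ∩ fdCell F' p.2.1)

theorem fdMass_eq_tsum_cellWeight (ν : Measure Z) (F S : Set Z) :
    fdMass G ν F S = ∑' B : Finset G, cellWeight B 1 * ν (S ∩ fdCell F B) := by
  refine (tsum_subtype {B : Finset G | (1 : G) ∈ B}
    fun B => (B.card : ℝ≥0∞)⁻¹ * ν (S ∩ fdCell F B)).trans (tsum_congr fun B => ?_)
  by_cases hB : (1 : G) ∈ B <;> simp [cellWeight, hB]

variable [Countable G]

theorem IsFiniteOverlapDomain.preimage (hmeas : ∀ g : G, Measurable fun z : Z => g • z)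
    {ν : Measure Z} {F : Set Z} (hF : IsFiniteOverlapDomain G ν F) {φ : Z → Z}
    (hφm : Measurable φ) (hφν : ∀ A : Set Z, MeasurableSet A → ν (φ ⁻¹' A) = ν A)
    (hφg : ∀ (g : G) (z : Z), φ (g • z) = g • φ z) :
    IsFiniteOverlapDomain G ν (φ ⁻¹' F) where
  measurableSet := hφm hF.measurableSet
  null_compl_iUnion_smul := by
    have hU : ⋃ g : G, (fun z : Z => g • z) '' (φ ⁻¹' F) =
        φ ⁻¹' ⋃ g : G, (fun z : Z => g • z) '' F := by
      simp only [image_smul, ← preimage_smul_inv, preimage_iUnion, ← preimage_comp, comp_def, hφg]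
    have hUm : MeasurableSet (⋃ g : G, (fun z : Z => g • z) '' F) := .iUnion fun g => by
      simpa only [image_smul, ← preimage_smul_inv] using hmeas g⁻¹ hF.measurableSet
    rw [hU, ← preimage_compl, hφν _ hUm.compl]
    exact hF.null_compl_iUnion_smul
  finite_setOf_smul_mem z hz := by
    simpa only [mem_preimage, hφg] using hF.finite_setOf_smul_mem (φ z) hz

theorem measure_eq_tsum_inter_fdCell (hmeas : ∀ g : G, Measurable fun z : Z => g • z)
    {ν : Measure Z} {F : Set Z} (hF : IsFiniteOverlapDomain G ν F) {X : Set Z}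
    (hX : MeasurableSet X) : ν X = ∑' B : Finset G, ν (X ∩ fdCell F B) := by
  rw [← measure_iUnion, ← inter_iUnion, iUnion_fdCell hF.finite_setOf_smul_mem, inter_univ]
  · exact (pairwise_disjoint_fdCell F).mono fun _ _ h =>
      h.mono inter_subset_right inter_subset_right
  · exact fun B => hX.inter (measurableSet_fdCell hmeas hF.measurableSet B)

theorem fdMass_eq_overlapMass (hmeas : ∀ g : G, Measurable fun z : Z => g • z)
    {ν : Measure Z} {F F' : Set Z} (hF : MeasurableSet F) (hF' : IsFiniteOverlapDomain G ν F')
    {S : Set Z} (hS : MeasurableSet S) : fdMass G ν F S = overlapMass G ν F F' S := by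
  rw [fdMass_eq_tsum_cellWeight, overlapMass, ENNReal.tsum_prod']
  refine tsum_congr fun B => ?_
  rw [ENNReal.tsum_prod', measure_eq_tsum_inter_fdCell hmeas hF'
    (hS.inter (measurableSet_fdCell hmeas hF B)), ← ENNReal.tsum_mul_left]
  refine tsum_congr fun C => ?_
  rcases C.eq_empty_or_nonempty with rfl | hC
  · simp [measure_mono_null (inter_subset_right.trans (fdCell_empty_subset F'))
      hF'.null_compl_iUnion_smul]
  · dsimp only
    rw [ENNReal.tsum_mul_right, ENNReal.tsum_mul_left, tsum_cellWeight hC, mul_one]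

theorem overlapMass_comm (hmeas : ∀ g : G, Measurable fun z : Z => g • z) {ν : Measure Z}
    (hinv : ∀ (g : G) (A : Set Z), MeasurableSet A → ν ((fun z : Z => g • z) ⁻¹' A) = ν A)
    {F F' S : Set Z} (hF : MeasurableSet F) (hF' : MeasurableSet F') (hS : MeasurableSet S)
    (hSinv : ∀ g : G, (fun z : Z => g • z) ⁻¹' S = S) :
    overlapMass G ν F F' S = overlapMass G ν F' F S := by
  conv_rhs => rw [overlapMass, ← (translateSwap_involutive.toPerm _).tsum_eq]
  refine tsum_congr fun ⟨B, C, h⟩ => ?_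
  have hcells : S ∩ fdCell F' (C.map (Equiv.mulRight h⁻¹).toEmbedding) ∩
      fdCell F (B.map (Equiv.mulRight h⁻¹).toEmbedding) =
      (fun z : Z => h⁻¹ • z) ⁻¹' (S ∩ fdCell F B ∩ fdCell F' C) := by
    rw [preimage_inter, preimage_inter, hSinv, preimage_smul_fdCell, preimage_smul_fdCell,
      inter_right_comm]
  simp only [Function.Involutive.coe_toPerm, translateSwap, cellWeight_map_mulRight, hcells,
    hinv _ _ ((hS.inter (measurableSet_fdCell hmeas hF B)).inter
      (measurableSet_fdCell hmeas hF' C))]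
  simp only [one_mul, inv_inv, inv_mul_cancel]
  ring

theorem fdMass_eq_of_isFiniteOverlapDomain (hmeas : ∀ g : G, Measurable fun z : Z => g • z)
    {ν : Measure Z}
    (hinv : ∀ (g : G) (A : Set Z), MeasurableSet A → ν ((fun z : Z => g • z) ⁻¹' A) = ν A)
    {F F' S : Set Z} (hF : IsFiniteOverlapDomain G ν F) (hF' : IsFiniteOverlapDomain G ν F')
    (hS : MeasurableSet S) (hSinv : ∀ g : G, (fun z : Z => g • z) ⁻¹' S = S) :
    fdMass G ν F S = fdMass G ν F' S := by
  rw [fdMass_eq_overlapMass hmeas hF.measurableSet hF' hS,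
    overlapMass_comm hmeas hinv hF.measurableSet hF'.measurableSet hS hSinv,
    fdMass_eq_overlapMass hmeas hF'.measurableSet hF hS]

theorem fdMass_preimage (hmeas : ∀ g : G, Measurable fun z : Z => g • z) {ν : Measure Z}
    {φ : Z → Z} (hφν : ∀ A : Set Z, MeasurableSet A → ν (φ ⁻¹' A) = ν A)
    (hφg : ∀ (g : G) (z : Z), φ (g • z) = g • φ z) {F S : Set Z} (hF : MeasurableSet F)
    (hS : MeasurableSet S) : fdMass G ν (φ ⁻¹' F) (φ ⁻¹' S) = fdMass G ν F S :=
  tsum_congr fun B => by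
    rw [← preimage_fdCell hφg, ← preimage_inter,
      hφν _ (hS.inter (measurableSet_fdCell hmeas hF B.1))]

end Measure

theorem stmt14 {G Z : Type*} [Group G] [Countable G] [MulAction G Z] [MeasurableSpace Z]
    (hmeas : ∀ g : G, Measurable fun z : Z => g • z)
    (ν : Measure Z)
    (hinv : ∀ (g : G) (A : Set Z), MeasurableSet A → ν ((fun z : Z => g • z) ⁻¹' A) = ν A)
    (F : Set Z) (hFm : MeasurableSet F)
    (hFfull : ν ((⋃ g : G, (fun z : Z => g • z) '' F)ᶜ) = 0)
    (hFfin : ∀ z ∈ F, {g : G | g • z ∈ F}.Finite)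
    (φ : Z → Z) (hφm : Measurable φ)
    (hφν : ∀ A : Set Z, MeasurableSet A → ν (φ ⁻¹' A) = ν A)
    (hφg : ∀ (g : G) (z : Z), φ (g • z) = g • φ z)
    (A : Set Z) (hA : MeasurableSet A)
    (hAinv : ∀ g : G, (fun z : Z => g • z) '' A = A) :
    ∑' B : {B : Finset G // (1 : G) ∈ B}, ((B.1.card : ℝ≥0∞))⁻¹ * ν (φ ⁻¹' A ∩ fdCell F B.1)
      = ∑' B : {B : Finset G // (1 : G) ∈ B}, ((B.1.card : ℝ≥0∞))⁻¹ * ν (A ∩ fdCell F B.1) := by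
  have hF : IsFiniteOverlapDomain G ν F := ⟨hFm, hFfull, hFfin⟩
  have hφAinv : ∀ g : G, (fun z : Z => g • z) ⁻¹' (φ ⁻¹' A) = φ ⁻¹' A := fun g => by
    rw [← preimage_comp, comp_def, funext (hφg g), ← comp_def (g • ·) φ, preimage_comp,
      preimage_smul, ← image_smul, hAinv]
  calc fdMass G ν F (φ ⁻¹' A)
      = fdMass G ν (φ ⁻¹' F) (φ ⁻¹' A) := fdMass_eq_of_isFiniteOverlapDomain hmeas hinv hF
          (hF.preimage hmeas hφm hφν hφg) (hφm hA) hφAinv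
    _ = fdMass G ν F A := fdMass_preimage hmeas hφν hφg hFm hA
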